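/- arXiv:2205.13252 — 3 statements merged into one kernel-verified Lean document; each statement's English description precedes it below -/
import Mathlib

section
/- Let R be a commutative ring, S a multiplicatively closed subset of R, M an R-module, and t a positive integer. If M is universally a^t-reduced (a^t-reduced for every a ∈ R), then the localization S⁻¹M is universally a^t-reduced as an S⁻¹R-module. -/
/-- if `M` is universally `a^t`-reduced over `R`, then `S⁻¹M` is
universally `a^t`-reduced as an `S⁻¹R`-module. -/
theorem stmt_5 {R : Type*} [CommRing R] (S : Submonoid R) {M : Type*}
    [AddCommGroup M] [Module R M] (t : ℕ) (ht : 1 ≤ t)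
    (h : ∀ a : R, ∀ m : M, ∀ k : ℕ, t ≤ k → a ^ k • m = 0 → a ^ t • m = 0) :
    ∀ a : Localization S, ∀ m : LocalizedModule S M, ∀ k : ℕ, t ≤ k →
      a ^ k • m = 0 → a ^ t • m = 0 := by
  intro a m k hk hzero
  induction a using Localization.induction_on with
  | H p =>
  obtain ⟨r, s⟩ := p
  induction m using LocalizedModule.induction_on with
  | _ x u =>
  rw [Localization.mk_pow, LocalizedModule.mk_smul_mk, ← LocalizedModule.zero_mk 1,
    LocalizedModule.mk_eq] at hzero
  obtain ⟨c, hc⟩ := hzero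
  simp only [smul_zero, one_smul] at hc
  -- hc : c • (r ^ k • x) = 0  (after simplification)
  have hc' : (c : R) ^ k • r ^ k • x = 0 := by
    have hk1 : 1 ≤ k := le_trans ht hk
    obtain ⟨k', rfl⟩ := Nat.exists_eq_add_of_le hk1
    have : (c : R) ^ (1 + k') = (c : R) ^ k' * c := by ring
    rw [this, mul_smul, Submonoid.smul_def] at *
    rw [hc, smul_zero]
  have key : ((c : R) * r) ^ t • x = 0 := by
    apply h ((c : R) * r) x k hk
    rw [mul_pow, mul_smul]
    exact hc'
  rw [Localization.mk_pow, LocalizedModule.mk_smul_mk, ← LocalizedModule.zero_mk 1,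
    LocalizedModule.mk_eq]
  refine ⟨c ^ t, ?_⟩
  simp only [smul_zero, one_smul]
  rw [Submonoid.smul_def, SubmonoidClass.coe_pow, ← mul_smul, ← mul_pow]
  exact key
end

section
/- Let R be a commutative ring and t a positive integer. Then R is von Neumann regular (for every a there is b with a = a^2 b) if and only if R is t-regular and every ideal of R is semiprime. -/
lemma aux_pow {R : Type*} [CommRing R] {x b : R} (h : x = x ^ 2 * b) :
    ∀ n : ℕ, 1 ≤ n → x = x ^ n * b ^ (n - 1) := by
  intro n hn
  induction n with
  | zero => omega
  | succ k ih =>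
    rcases Nat.eq_or_lt_of_le hn with h1 | h1
    · simp [← h1]
    · have hk : 1 ≤ k := by omega
      have := ih hk
      calc x = x ^ 2 * b := h
        _ = x * (x * b) := by ring
        _ = (x ^ k * b ^ (k - 1)) * (x * b) := by rw [← this]
        _ = x ^ (k + 1) * b ^ k := by
            rw [pow_succ]
            have : b ^ (k - 1) * b = b ^ k := by
              rw [← pow_succ]; congr 1; omega
            rw [← this]; ring

/-- `R` is von Neumann regular iff `R` is `t`-regular and every
ideal of `R` is semiprime. -/
theorem stmt_9 {R : Type*} [CommRing R] (t : ℕ) (ht : 1 ≤ t) :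
    (∀ a : R, ∃ b : R, a = a ^ 2 * b) ↔
    ((∀ a : R, ∃ b : R, a ^ t = a ^ (2 * t) * b) ∧
      ∀ J : Ideal R, ∀ x : R, ∀ n : ℕ, 1 ≤ n → x ^ n ∈ J → x ∈ J) := by
  constructor
  · intro h
    constructor
    · intro a
      obtain ⟨b, hb⟩ := h (a ^ t)
      exact ⟨b, by rw [hb, ← pow_mul, mul_comm t 2]⟩
    · intro J x n hn hx
      obtain ⟨b, hb⟩ := h x
      rw [aux_pow hb n hn]
      exact J.mul_mem_right _ hx
  · rintro ⟨hreg, hsp⟩ a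
    obtain ⟨b, hb⟩ := hreg a
    have h2 : a ^ t ∈ Ideal.span {a ^ 2} := by
      rw [Ideal.mem_span_singleton, hb]
      exact ⟨a ^ (2 * t - 2) * b, by rw [← mul_assoc, ← pow_add]; congr 2; omega⟩
    have := hsp _ a t ht h2
    rw [Ideal.mem_span_singleton] at this
    obtain ⟨c, hc⟩ := this
    exact ⟨c, hc⟩
end

section
/- Let R be a commutative ring and t a positive integer. If every cyclic R-module is universally a^t-reduced, then R is t-regular: for every a ∈ R there exists b ∈ R with a^t = a^{2t} b. -/
universe u

/-- if every cyclic `R`-module is universally `a^t`-reduced, then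
`R` is `t`-regular. -/
theorem stmt_13 {R : Type u} [CommRing R] (t : ℕ) (ht : 1 ≤ t)
    (h : ∀ (M : Type u) [AddCommGroup M] [Module R M],
      (∃ m : M, Submodule.span R ({m} : Set M) = ⊤) →
      ∀ a : R, ∀ m : M, ∀ k : ℕ, t ≤ k → a ^ k • m = 0 → a ^ t • m = 0) :
    ∀ a : R, ∃ b : R, a ^ t = a ^ (2 * t) * b := by
  intro a
  set I : Ideal R := Ideal.span {a ^ (2 * t)}
  have hcyc : ∃ m : R ⧸ I, Submodule.span R ({m} : Set (R ⧸ I)) = ⊤ := by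
    refine ⟨Ideal.Quotient.mk I 1, ?_⟩
    rw [eq_top_iff]
    rintro x -
    obtain ⟨y, rfl⟩ := Ideal.Quotient.mk_surjective x
    have : Ideal.Quotient.mk I y = y • Ideal.Quotient.mk I 1 := by
      rw [Algebra.smul_def, Ideal.Quotient.algebraMap_eq]; simp
    rw [this]
    exact Submodule.smul_mem _ _ (Submodule.mem_span_singleton_self _)
  have hk : a ^ (2 * t) • (Ideal.Quotient.mk I 1 : R ⧸ I) = 0 := by
    have : (Ideal.Quotient.mk I (a ^ (2 * t)) : R ⧸ I) = 0 := by
      rw [Ideal.Quotient.eq_zero_iff_mem]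
      exact Ideal.mem_span_singleton_self _
    simpa [Algebra.smul_def, Ideal.Quotient.algebraMap_eq] using this
  have := h (R ⧸ I) hcyc a (Ideal.Quotient.mk I 1) (2 * t) (by omega) hk
  have hmem : a ^ t ∈ I := by
    rw [← Ideal.Quotient.eq_zero_iff_mem]
    simpa [Algebra.smul_def, Ideal.Quotient.algebraMap_eq] using this
  obtain ⟨b, hb⟩ := Ideal.mem_span_singleton'.mp hmem
  exact ⟨b, by rw [← hb, mul_comm]⟩
end
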